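/- arXiv:1602.02271 — 2 statements merged into one kernel-verified Lean document; each statement's English description precedes it below -/
import Mathlib

section
/- Let 𝕜 be a complete nontrivially normed field and let L be a finite-dimensional normed 𝕜-vector space equipped with a 𝕜-bilinear Lie bracket ⁅·,·⁆ making L a Lie algebra over 𝕜. For a continuous 𝕜-linear functional λ : L → 𝕜, let 𝔰(λ) := {x ∈ L : λ(⁅x, y⁆) = 0 for all y ∈ L}, a 𝕜-linear subspace of L. Then for every natural number n, the set {λ : finrank 𝕜 (𝔰(λ)) < n} is open in the continuous dual of L equipped with the operator norm topology. -/
open Module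

/-- The stabilizer (centralizer) of a continuous linear functional `l` on a Lie algebra
`(L, bracket)` under the coadjoint action:
`𝔰(l) = {x ∈ L : l ⁅x, y⁆ = 0 for all y ∈ L}`. -/
def coadjointStabilizer {𝕜 : Type*} [NontriviallyNormedField 𝕜]
    {L : Type*} [NormedAddCommGroup L] [NormedSpace 𝕜 L]
    (bracket : L →ₗ[𝕜] L →ₗ[𝕜] L) (l : L →L[𝕜] 𝕜) : Submodule 𝕜 L where
  carrier := {x : L | ∀ y : L, l (bracket x y) = 0}
  add_mem' := by
    intro a b ha hb y
    rw [map_add, LinearMap.add_apply, map_add, ha y, hb y, add_zero]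
  zero_mem' := by
    intro y
    rw [map_zero, LinearMap.zero_apply, map_zero]
  smul_mem' := by
    intro c a ha y
    rw [map_smul, LinearMap.smul_apply, map_smul, ha y, smul_zero]

/-! `𝔰(λ)` is the kernel of `x ↦ λ ∘ ad x`, a continuous linear map depending continuously
(indeed linearly) on `λ`. By rank–nullity, `dim 𝔰(λ) < n` says that this map has rank at least
`dim L + 1 - n`, and having rank at least `k` is an open condition, as it is witnessed by
finitely many linearly independent vectors of the image. -/

theorem LinearMap.finrank_ker_lt_iff_le_rank {K V W : Type*} [Field K] [AddCommGroup V]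
    [Module K V] [FiniteDimensional K V] [AddCommGroup W] [Module K W] (f : V →ₗ[K] W) (n : ℕ) :
    finrank K (ker f) < n ↔ ((finrank K V + 1 - n : ℕ) : Cardinal) ≤ f.rank := by
  rw [LinearMap.rank, ← finrank_eq_rank, Nat.cast_le]
  have := f.finrank_range_add_finrank_ker
  omega

theorem isOpen_setOfPred_finrank_ker_lt {𝕜 : Type*} [NontriviallyNormedField 𝕜] [CompleteSpace 𝕜]
    {E : Type*} [NormedAddCommGroup E] [NormedSpace 𝕜 E] [FiniteDimensional 𝕜 E]
    {F : Type*} [NormedAddCommGroup F] [NormedSpace 𝕜 F] (n : ℕ) :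
    IsOpen {f : E →L[𝕜] F | finrank 𝕜 (LinearMap.ker (f : E →ₗ[𝕜] F)) < n} := by
  simp only [LinearMap.finrank_ker_lt_iff_le_rank]
  exact isOpen_setOfPred_nat_le_rank _

theorem coadjointStabilizer_eq_ker {𝕜 : Type*} [NontriviallyNormedField 𝕜] [CompleteSpace 𝕜]
    {L : Type*} [NormedAddCommGroup L] [NormedSpace 𝕜 L] [FiniteDimensional 𝕜 L]
    (bracket : L →ₗ[𝕜] L →ₗ[𝕜] L) (l : L →L[𝕜] 𝕜) :
    coadjointStabilizer bracket l =
      LinearMap.ker ((ContinuousLinearMap.compL 𝕜 L L 𝕜 l ∘L bracket.toContinuousBilinearMap :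
        L →L[𝕜] L →L[𝕜] 𝕜) : L →ₗ[𝕜] L →L[𝕜] 𝕜) := by
  ext x
  simp only [LinearMap.mem_ker, ContinuousLinearMap.coe_coe, ContinuousLinearMap.ext_iff]
  rfl

theorem stmt5_general {𝕜 : Type*} [NontriviallyNormedField 𝕜] [CompleteSpace 𝕜]
    {L : Type*} [NormedAddCommGroup L] [NormedSpace 𝕜 L] [FiniteDimensional 𝕜 L]
    (bracket : L →ₗ[𝕜] L →ₗ[𝕜] L)
    (n : ℕ) :
    IsOpen {l : L →L[𝕜] 𝕜 | finrank 𝕜 (coadjointStabilizer bracket l) < n} := by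
  have hcont : Continuous fun l : L →L[𝕜] 𝕜 =>
      ContinuousLinearMap.compL 𝕜 L L 𝕜 l ∘L bracket.toContinuousBilinearMap := by
    fun_prop
  convert (isOpen_setOfPred_finrank_ker_lt n).preimage hcont using 1
  ext l
  rw [Set.mem_ofPred_eq, coadjointStabilizer_eq_ker]
  rfl

/-- Let `𝕜` be a complete nontrivially normed field and `L` a
finite-dimensional normed `𝕜`-vector space equipped with a `𝕜`-bilinear Lie bracket
(antisymmetric and satisfying the Jacobi identity) making `L` a Lie algebra over `𝕜`.
For a continuous linear functional `λ : L → 𝕜`, let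
`𝔰(λ) := {x ∈ L : λ ⁅x, y⁆ = 0 for all y ∈ L}`, a `𝕜`-subspace of `L`. Then for every
`n : ℕ`, the set `{λ : finrank 𝕜 𝔰(λ) < n}` is open in the continuous dual `L →L[𝕜] 𝕜`
equipped with the operator norm topology. -/
theorem stmt5 {𝕜 : Type*} [NontriviallyNormedField 𝕜] [CompleteSpace 𝕜]
    {L : Type*} [NormedAddCommGroup L] [NormedSpace 𝕜 L] [FiniteDimensional 𝕜 L]
    (bracket : L →ₗ[𝕜] L →ₗ[𝕜] L)
    (hanti : ∀ x : L, bracket x x = 0)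
    (hjacobi : ∀ x y z : L,
      bracket x (bracket y z) + bracket y (bracket z x) + bracket z (bracket x y) = 0)
    (n : ℕ) :
    IsOpen {l : L →L[𝕜] 𝕜 | finrank 𝕜 (coadjointStabilizer bracket l) < n} :=
  stmt5_general bracket n
end

section
/- Let A be a semisimple ring and let M and N be left A-modules with M ≠ 0. Assume that there is no simple A-module S admitting both an injective A-linear map S → M and an injective A-linear map S → N. Then there exists an idempotent element e ∈ A (e * e = e) such that e • m ≠ 0 for some m ∈ M, while e • x = 0 for every x ∈ N. -/
universe u

/-! A simple submodule of `M` is isomorphic to `A ⧸ I` for a maximal left ideal `I`, and in a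
semisimple ring `I = A f` with `f` idempotent. The idempotent `e = 1 - f` acts as the identity
on the image of `1` in `A ⧸ I ↪ M`. If `e • x ≠ 0` for some `x : N`, then `a ↦ a e • x` vanishes
on `I` (because `f e = 0`) and so induces a nonzero, hence injective, map from the simple module
`A ⧸ I` to `N`, making `A ⧸ I` a common simple submodule of `M` and `N`. -/

open LinearMap

theorem IsSemisimpleModule.exists_isMaximal_injective_quotient (A M : Type*) [Ring A]
    [AddCommGroup M] [Module A M] [IsSemisimpleModule A M] [Nontrivial M] :
    ∃ I : Ideal A, I.IsMaximal ∧ ∃ φ : (A ⧸ I) →ₗ[A] M, Function.Injective φ := by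
  obtain ⟨S, hS⟩ := IsSemisimpleModule.exists_simple_submodule A M
  obtain ⟨I, hI, ⟨ψ⟩⟩ := isSimpleModule_iff_quot_maximal.mp hS
  exact ⟨I, hI, S.subtype ∘ₗ ψ.symm.toLinearMap, S.injective_subtype.comp ψ.symm.injective⟩

section

variable {A : Type*} [Ring A] {N : Type*} [AddCommGroup N] [Module A N]

theorem Submodule.injective_liftQ_toSpanSingleton {I : Submodule A A}
    [IsSimpleModule A (A ⧸ I)] {y : N} (hy : y ≠ 0) (hI : I ≤ ker (toSpanSingleton A N y)) :
    Function.Injective (I.liftQ (toSpanSingleton A N y) hI) := by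
  refine (I.liftQ _ hI).injective_or_eq_zero.resolve_right fun h ↦ hy ?_
  simpa using LinearMap.congr_fun h (Submodule.Quotient.mk 1)

theorem IsIdempotentElem.span_singleton_le_ker_toSpanSingleton_one_sub_smul {f : A}
    (hf : IsIdempotentElem f) (x : N) :
    Ideal.span {f} ≤ ker (toSpanSingleton A N ((1 - f) • x)) := by
  intro a ha
  obtain ⟨b, rfl⟩ := Ideal.mem_span_singleton'.mp ha
  simp [smul_smul, mul_assoc, mul_sub, hf.eq]

end

/-- Let `A` be a semisimple ring and let `M`, `N` be left `A`-modules
with `M ≠ 0`. Assume there is no simple `A`-module `S` admitting both an injective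
`A`-linear map `S → M` and an injective `A`-linear map `S → N`. Then there exists an
idempotent `e ∈ A` with `e • m ≠ 0` for some `m ∈ M`, while `e • x = 0` for all `x ∈ N`. -/
theorem stmt6 {A : Type u} [Ring A] [IsSemisimpleRing A]
    {M N : Type u} [AddCommGroup M] [Module A M] [AddCommGroup N] [Module A N]
    [Nontrivial M]
    (h : ∀ (S : Type u) [AddCommGroup S] [Module A S], IsSimpleModule A S →
      ¬ ((∃ f : S →ₗ[A] M, Function.Injective f) ∧
         (∃ g : S →ₗ[A] N, Function.Injective g))) :
    ∃ e : A, e * e = e ∧ (∃ m : M, e • m ≠ 0) ∧ ∀ x : N, e • x = 0 := by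
  obtain ⟨I, hI, φ, hφ⟩ := IsSemisimpleModule.exists_isMaximal_injective_quotient A M
  have hsimple : IsSimpleModule A (A ⧸ I) := isSimpleModule_iff_isCoatom.mpr (Ideal.isMaximal_def.mp hI)
  obtain ⟨f, hf, rfl⟩ := IsSemisimpleRing.ideal_eq_span_idempotent I
  refine ⟨1 - f, hf.one_sub.eq, ⟨φ (Submodule.Quotient.mk 1), ?_⟩, fun x ↦ ?_⟩
  · have hf_mem : f ∈ Ideal.span {f} := Ideal.mem_span_singleton_self f
    rw [← map_smul, ne_eq, ← map_zero φ, hφ.eq_iff, ← Submodule.Quotient.mk_smul, smul_eq_mul,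
      mul_one, Submodule.Quotient.mk_eq_zero]
    exact fun h1f ↦ hI.ne_top ((Ideal.eq_top_iff_one _).mpr (by simpa using add_mem h1f hf_mem))
  · by_contra hx
    exact h (A ⧸ Ideal.span {f}) hsimple ⟨⟨φ, hφ⟩, ⟨_, Submodule.injective_liftQ_toSpanSingleton hx
      (hf.span_singleton_le_ker_toSpanSingleton_one_sub_smul x)⟩⟩
end
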